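/- arXiv:1907.02137 — 2 statements merged into one kernel-verified Lean document; each statement's English description precedes it below -/
import Mathlib

section
/- Let P be any subset of K with 1 ∈ P. Then there exists a mutation algebra (A, M, ω) over K containing an idempotent e (e·e = e, e ≠ 0) with ω(e) = 1 such that the set of eigenvalues of the left-multiplication operator L_e : A → A, x ↦ e·x, is exactly P (λ ∈ K is an eigenvalue iff there exists v ≠ 0 in A with e·v = λ·v). -/
namespace Evanescent

universe u v

variable {T : Type u}

/-- The commutativity relation on the free magma on `T`. -/
inductive CommRel (T : Type u) : FreeMagma T → FreeMagma T → Prop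
  | comm (a b : FreeMagma T) : CommRel T (a * b) (b * a)
  | mul_left {a b : FreeMagma T} (c : FreeMagma T) :
      CommRel T a b → CommRel T (a * c) (b * c)
  | mul_right (c : FreeMagma T) {a b : FreeMagma T} :
      CommRel T a b → CommRel T (c * a) (c * b)

/-- The free commutative magma on `T`: the set of commutative nonassociative
monomials (words) in the variables `T`. -/
def FreeCommMagma (T : Type u) : Type u := Quot (CommRel T)

namespace FreeCommMagma

instance : Mul (FreeCommMagma T) :=
  ⟨Quot.map₂ (· * ·) (fun a _ _ h => CommRel.mul_right a h)
    (fun _ _ b h => CommRel.mul_left b h)⟩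

/-- The class of a nonassociative word in the free commutative magma. -/
def mk (w : FreeMagma T) : FreeCommMagma T := Quot.mk (CommRel T) w

/-- The generator of the free commutative magma corresponding to a variable. -/
def of (t : T) : FreeCommMagma T := mk (FreeMagma.of t)

@[simp] lemma mk_mul (a b : FreeMagma T) : mk a * mk b = mk (a * b) := rfl

protected lemma mul_comm (a b : FreeCommMagma T) : a * b = b * a := by
  induction a using Quot.ind
  induction b using Quot.ind
  exact Quot.sound (CommRel.comm _ _)

instance : CommMagma (FreeCommMagma T) := ⟨FreeCommMagma.mul_comm⟩

end FreeCommMagma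

section Peirce

variable (R : Type v) [Semiring R] [DecidableEq T]

/-- The Peirce polynomial of a (noncommutative) nonassociative word, with
coefficients in `R`. -/
noncomputable def peirceAux (i : T) : FreeMagma T → Polynomial R
  | .of j => if j = i then 1 else 0
  | .mul u v => Polynomial.X * (peirceAux i u + peirceAux i v)

@[simp] lemma peirceAux_mul (i : T) (u v : FreeMagma T) :
    peirceAux R i (u * v) = Polynomial.X * (peirceAux R i u + peirceAux R i v) := rfl

@[simp] lemma peirceAux_of (i j : T) :
    peirceAux R i (FreeMagma.of j) = if j = i then 1 else 0 := rfl

/-- The number of occurrences of the variable `i` in a nonassociative word. -/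
def countAux (i : T) : FreeMagma T → ℕ
  | .of j => if j = i then 1 else 0
  | .mul u v => countAux i u + countAux i v

@[simp] lemma countAux_mul (i : T) (u v : FreeMagma T) :
    countAux i (u * v) = countAux i u + countAux i v := rfl

lemma peirceAux_respects (i : T) {a b : FreeMagma T} (h : CommRel T a b) :
    peirceAux R i a = peirceAux R i b := by
  induction h with
  | comm a b => simp [add_comm]
  | mul_left c h ih => simp [ih]
  | mul_right c h ih => simp [ih]

lemma countAux_respects (i : T) {a b : FreeMagma T} (h : CommRel T a b) :
    countAux i a = countAux i b := by
  induction h with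
  | comm a b => simp [Nat.add_comm]
  | mul_left c h ih => simp [ih]
  | mul_right c h ih => simp [ih]

/-- The Peirce polynomial `∂ᵢ(w)` of a commutative nonassociative monomial `w`,
determined by `∂ᵢ(tᵢ) = 1`, `∂ᵢ(tⱼ) = 0` for `j ≠ i`, and
`∂ᵢ(u·v) = X·(∂ᵢ(u) + ∂ᵢ(v))`. -/
noncomputable def FreeCommMagma.peirce (i : T) : FreeCommMagma T → Polynomial R :=
  Quot.lift (peirceAux R i) fun _ _ h => peirceAux_respects R i h

/-- The number of occurrences (degree) of the variable `i` in a commutative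
nonassociative monomial. -/
def FreeCommMagma.count (i : T) : FreeCommMagma T → ℕ :=
  Quot.lift (countAux i) fun _ _ h => countAux_respects i h

end Peirce

/-- Principal powers of an element of a magma: `ppow a n = a^(n+1)`,
i.e. `ppow a 0 = a` and `ppow a (n+1) = a * (ppow a n)`. -/
def ppow {M : Type v} [Mul M] (a : M) : ℕ → M
  | 0 => a
  | n + 1 => a * ppow a n

/-- Iterated left multiplication: `lpow a r g = a^{{r}} g`, i.e. `lpow a 0 g = g` and
`lpow a (r+1) g = a * (lpow a r g)`. -/
def lpow {M : Type v} [Mul M] (a : M) : ℕ → M → M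
  | 0, g => g
  | r + 1, g => a * lpow a r g

section Algebra

variable (K : Type v) [Field K]

/-- A commutative nonassociative monomial, viewed as an element of the free
commutative nonassociative algebra `K(T)` (realized as the magma algebra of the
free commutative magma). -/
noncomputable def mono (w : FreeCommMagma T) : MonoidAlgebra K (FreeCommMagma T) :=
  MonoidAlgebra.single w 1

/-- The augmentation (sum of the coefficients) of an element of the free
commutative nonassociative algebra. -/
noncomputable def aug : MonoidAlgebra K (FreeCommMagma T) →ₗ[K] K :=
  (Finsupp.lsum K fun _ => LinearMap.id).comp (MonoidAlgebra.coeffLinearEquiv K).toLinearMap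

/-- The Peirce polynomial `∂ᵢ : K(T) → K[X]`, the `K`-linear map determined on
monomials by `∂ᵢ(tᵢ) = 1`, `∂ᵢ(tⱼ) = 0` for `j ≠ i`, and `∂ᵢ(u·v) = X·(∂ᵢ(u) + ∂ᵢ(v))`. -/
noncomputable def Dp [DecidableEq T] (i : T) :
    MonoidAlgebra K (FreeCommMagma T) →ₗ[K] Polynomial K :=
  (Finsupp.lsum K fun w => LinearMap.toSpanSingleton K (Polynomial K)
    (FreeCommMagma.peirce K i w)).comp (MonoidAlgebra.coeffLinearEquiv K).toLinearMap

/-- The free commutative nonassociative algebra is commutative. -/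
lemma fca_mul_comm (f g : MonoidAlgebra K (FreeCommMagma T)) : f * g = g * f := by
  rw [MonoidAlgebra.mul_def, MonoidAlgebra.mul_def, Finsupp.sum_comm]
  refine Finsupp.sum_congr fun a _ => Finsupp.sum_congr fun c _ => ?_
  rw [FreeCommMagma.mul_comm, mul_comm (f.coeff c) (g.coeff a)]

end Algebra

section Subst

variable (K : Type v) [Field K] {A : Type*} [Mul A]

/-- Evaluation of a nonassociative word under a substitution of the variables. -/
def evalAux (ρ : T → A) : FreeMagma T → A
  | .of t => ρ t
  | .mul u v => evalAux ρ u * evalAux ρ v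

@[simp] lemma evalAux_mul (ρ : T → A) (u v : FreeMagma T) :
    evalAux ρ (u * v) = evalAux ρ u * evalAux ρ v := rfl

/-- Evaluation of a commutative nonassociative monomial in a commutative magma
under a substitution of the variables. -/
def FreeCommMagma.eval (hA : ∀ a b : A, a * b = b * a) (ρ : T → A) :
    FreeCommMagma T → A :=
  Quot.lift (evalAux ρ) (by
    intro a b h
    induction h with
    | comm a b => exact hA _ _
    | mul_left c h ih => simp [ih]
    | mul_right c h ih => simp [ih])

/-- The substitution homomorphism `ρ̂ : K(T) → A` extending a substitution
`ρ : T → A` of the variables, for `A` a commutative nonassociative `K`-algebra. -/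
noncomputable def subst [AddCommMonoid A] [Module K A]
    (hA : ∀ a b : A, a * b = b * a) (ρ : T → A)
    (f : MonoidAlgebra K (FreeCommMagma T)) : A :=
  f.coeff.sum fun w c => c • FreeCommMagma.eval hA ρ w

end Subst

/-- The list of the leaves of a nonassociative word (a rooted binary tree with
leaves labeled by the variables), together with their heights. -/
def leaves : FreeMagma T → List (T × ℕ)
  | .of t => [(t, 0)]
  | .mul u v => (leaves u ++ leaves v).map fun p => (p.1, p.2 + 1)

end Evanescent
universe u₉

/-!
Take `A = K × K^(P)` with weight `ω` the first coordinate and `M = id × 2D`, where `D` is the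
diagonal operator scaling the basis vector of `p ∈ P` by `p`. For `e = (1, 0)` the factor `½` in
the mutation product cancels the `2`, so `L_e = id × D`, whose eigenvalues are `1` together
with the diagonal entries `P`.
-/

namespace Module.End

variable {R M N : Type*} [CommRing R] [AddCommGroup M] [Module R M] [AddCommGroup N] [Module R N]

lemma hasEigenvalue_iff_exists_ne_zero {f : End R M} {μ : R} :
    f.HasEigenvalue μ ↔ ∃ v, v ≠ 0 ∧ f v = μ • v := by
  refine ⟨fun h => ?_, fun ⟨v, hv, hfv⟩ =>
    hasEigenvalue_of_hasEigenvector ⟨mem_eigenspace_iff.2 hfv, hv⟩⟩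
  obtain ⟨v, hv, hne⟩ := h.exists_hasEigenvector
  exact ⟨v, hne, mem_eigenspace_iff.1 hv⟩

lemma hasEigenvalue_prodMap_iff {f : End R M} {g : End R N} {μ : R} :
    HasEigenvalue (f.prodMap g) μ ↔ f.HasEigenvalue μ ∨ g.HasEigenvalue μ := by
  simp only [hasEigenvalue_iff_exists_ne_zero]
  constructor
  · rintro ⟨⟨x, y⟩, hne, hxy⟩
    obtain ⟨hx, hy⟩ := Prod.ext_iff.1 hxy
    by_cases hx0 : x = 0
    · exact .inr ⟨y, fun hy0 => hne (by simp [hx0, hy0]), hy⟩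
    · exact .inl ⟨x, hx0, hx⟩
  · rintro (⟨x, hx, hfx⟩ | ⟨y, hy, hgy⟩)
    · exact ⟨(x, 0), by simpa using hx, by simpa using hfx⟩
    · exact ⟨(0, y), by simpa using hy, by simpa using hgy⟩

lemma hasEigenvalue_id_iff [IsDomain R] [Nontrivial M] [IsTorsionFree R M] {μ : R} :
    HasEigenvalue (LinearMap.id : End R M) μ ↔ μ = 1 := by
  rw [hasEigenvalue_iff_exists_ne_zero]
  constructor
  · rintro ⟨v, hv, hμv⟩
    exact smul_left_injective R hv (by simpa using hμv.symm)
  · rintro rfl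
    obtain ⟨v, hv⟩ := exists_ne (0 : M)
    exact ⟨v, hv, by simp⟩

end Module.End

namespace Finsupp

open Module End

variable {R ι : Type*} [CommRing R]

noncomputable def diagonal (d : ι → R) : End R (ι →₀ R) :=
  DistribSMul.toLinearMap R (ι →₀ R) d

@[simp] lemma diagonal_apply (d : ι → R) (f : ι →₀ R) (i : ι) : diagonal d f i = d i * f i := rfl

lemma hasEigenvalue_diagonal_iff [IsDomain R] {d : ι → R} {μ : R} :
    (diagonal d).HasEigenvalue μ ↔ μ ∈ Set.range d := by
  rw [hasEigenvalue_iff_exists_ne_zero]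
  constructor
  · rintro ⟨v, hv, hdv⟩
    obtain ⟨i, hi⟩ := Finsupp.ne_iff.1 hv
    exact ⟨i, mul_right_cancel₀ hi (by simpa using DFunLike.congr_fun hdv i)⟩
  · rintro ⟨i, rfl⟩
    refine ⟨single i 1, by simp, ?_⟩
    ext j
    by_cases hij : i = j <;> simp [hij]

end Finsupp

section Mutation

open Module

variable {K A V : Type*} [Field K] [AddCommGroup A] [Module K A] [AddCommGroup V] [Module K V]

def mutationMul (M : A →ₗ[K] A) (ω : A →ₗ[K] K) (x y : A) : A :=
  (2 : K)⁻¹ • (ω y • M x + ω x • M y)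

lemma mutationMul_prodMap_id_two_smul (h2 : (2 : K) ≠ 0) (D : End K V) (x : K × V) :
    mutationMul (LinearMap.prodMap LinearMap.id ((2 : K) • D)) (LinearMap.fst K K V) (1, 0) x =
      LinearMap.prodMap LinearMap.id D x := by
  obtain ⟨a, v⟩ := x
  ext
  · simp only [mutationMul, LinearMap.fst_apply, LinearMap.prodMap_apply, LinearMap.id_coe,
      id_eq, LinearMap.smul_apply, map_zero, smul_zero, Prod.smul_mk, smul_eq_mul, mul_one,
      one_smul, Prod.mk_add_mk, zero_add]
    rw [← two_mul, inv_mul_cancel_left₀ h2]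
  · simp [mutationMul, smul_smul, h2]

end Mutation

open Evanescent in
/-- Any subset `P ⊆ K` containing `1` is the Peirce spectrum (the set of
eigenvalues of `L_e`) of some mutation algebra with an idempotent `e` of weight `1`. -/
theorem exists_mutation_algebra_with_spectrum
    {K : Type u₉} [Field K] (hchar : (2 : K) ≠ 0)
    (P : Set K) (hP : (1 : K) ∈ P) :
    ∃ (A : Type u₉) (_ : AddCommGroup A) (_ : Module K A)
      (M : A →ₗ[K] A) (ω : A →ₗ[K] K),
      ω ≠ 0 ∧ (∀ x, ω (M x) = ω x) ∧
      ∃ e : A, e ≠ 0 ∧ ω e = 1 ∧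
        (2 : K)⁻¹ • (ω e • M e + ω e • M e) = e ∧
        ∀ lam : K, lam ∈ P ↔
          ∃ v : A, v ≠ 0 ∧ (2 : K)⁻¹ • (ω v • M e + ω e • M v) = lam • v := by
  let D := Finsupp.diagonal (Subtype.val : P → K)
  let M : Module.End K (K × (P →₀ K)) := .prodMap .id ((2 : K) • D)
  let ω := LinearMap.fst K K (P →₀ K)
  have hLe := mutationMul_prodMap_id_two_smul hchar D
  refine ⟨K × (P →₀ K), inferInstance, inferInstance, M, ω,
    fun h => by simpa [ω] using LinearMap.congr_fun h (1, 0), fun _ => rfl,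
    (1, 0), by simp, rfl, (hLe _).trans (by simp), fun lam => ?_⟩
  calc lam ∈ P ↔ lam = 1 ∨ lam ∈ Set.range (Subtype.val : P → K) := by
        rw [Subtype.range_val]
        exact ⟨Or.inr, Or.rec (· ▸ hP) id⟩
    _ ↔ Module.End.HasEigenvalue (LinearMap.id.prodMap D : Module.End K (K × (P →₀ K))) lam := by
        rw [Module.End.hasEigenvalue_prodMap_iff, Module.End.hasEigenvalue_id_iff,
          Finsupp.hasEigenvalue_diagonal_iff]
    _ ↔ ∃ v, v ≠ 0 ∧ mutationMul M ω (1, 0) v = lam • v := by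
        simp only [Module.End.hasEigenvalue_iff_exists_ne_zero, M, ω, hLe]
end

section
/- In K(x,y,z): (i) if f is a K-linear combination of the monomials x·(y·z), (x·y)·z, (x·z)·y, x·y, x·z, y·z and ∂_x(f) = ∂_y(f) = ∂_z(f) = 0, then f = 0 (there is no train Peirce-evanescent identity of degree (1,1,1)); (ii) for every n ≥ 2 and every commutative nonassociative monomial w of multidegree (n,1,1) in (x,y,z) that is not of any of the forms x^{{r}}((x·y)·z), x^{{r}}((x·z)·y), x^{{r}}(y·z) (r ≥ 0), there exists a unique element P_w of the K-linear span of {x^{{k}}((x·y)·z) : 0 ≤ k ≤ n−1} ∪ {x^{{k}}((x·z)·y) : 0 ≤ k ≤ n−1} ∪ {x^{{k}}(y·z) : 0 ≤ k ≤ n} such that ε(P_w) = 1 and ∂_x(w − P_w) = ∂_y(w − P_w) = ∂_z(w − P_w) = 0; consequently w − P_w is a Peirce-evanescent identity. -/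
namespace Evanescent

/-- The variable `x` of `K(x,y,z)`. -/
def x3 : FreeCommMagma (Fin 3) := FreeCommMagma.of 0

/-- The variable `y` of `K(x,y,z)`. -/
def y3 : FreeCommMagma (Fin 3) := FreeCommMagma.of 1

/-- The variable `z` of `K(x,y,z)`. -/
def z3 : FreeCommMagma (Fin 3) := FreeCommMagma.of 2

/-- The span of `{x^{{k}}((x·y)·z) : 0 ≤ k ≤ n−1} ∪ {x^{{k}}((x·z)·y) : 0 ≤ k ≤ n−1}
∪ {x^{{k}}(y·z) : 0 ≤ k ≤ n}` in `K(x,y,z)`. -/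
noncomputable def trainSpan3 (K : Type*) [Field K] (n : ℕ) :
    Submodule K (MonoidAlgebra K (FreeCommMagma (Fin 3))) :=
  Submodule.span K
    (((fun k => mono K (lpow x3 k ((x3 * y3) * z3))) '' Set.Iic (n - 1)) ∪
     ((fun k => mono K (lpow x3 k ((x3 * z3) * y3))) '' Set.Iic (n - 1)) ∪
     ((fun k => mono K (lpow x3 k (y3 * z3))) '' Set.Iic n))

end Evanescent

/-!
Write an element of the span as `P = p(Lₓ)((x·y)·z) + q(Lₓ)((x·z)·y) + r(Lₓ)(y·z)`, where `Lₓ` is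
left multiplication by `x`, `deg p, deg q < n` and `deg r ≤ n`. Its Peirce polynomials are
`∂_y P = X²p + Xq + Xr`, `∂_z P = Xp + X²q + Xr` and
`(X - 1) ∂ₓ P = (X - 1) X² (p + q) + X (p + q + r - ε(P))`, so `∂(P) = ∂(w)` is a linear
system over `K[X]`; its homogeneous version has only the trivial solution, which gives
uniqueness. For `w` of multidegree `(n,1,1)` one has `∂_y w = X^(k+1)`, `∂_z w = X^(l+1)`, and
the system is solvable once an explicit polynomial built from `∂ₓ w` vanishes at `0` and at
`1/2`: at `0` because `w` is a product, at `1/2` by the Kraft equality `∑ₜ ∂ₜ(w)(1/2) = 1`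
for binary trees. Finally `w` does not lie in the span, so `w - P_w ≠ 0`.
-/

namespace Evanescent

open Polynomial Finset

namespace FreeCommMagma

variable {T : Type*}

@[elab_as_elim]
lemma induction_on {motive : FreeCommMagma T → Prop} (w : FreeCommMagma T)
    (of : ∀ t, motive (of t)) (mul : ∀ a b, motive a → motive b → motive (a * b)) :
    motive w := by
  induction w using Quot.ind with
  | mk u =>
    induction u with
    | ih1 t => exact of t
    | ih2 u v hu hv => exact mul (mk u) (mk v) hu hv

variable [DecidableEq T]

@[simp] lemma count_of (i j : T) : count i (of j) = if j = i then 1 else 0 := rfl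

@[simp] lemma count_mul (i : T) (a b : FreeCommMagma T) :
    count i (a * b) = count i a + count i b := by
  induction a using Quot.ind
  induction b using Quot.ind
  rfl

section Semiring

variable (R : Type*) [Semiring R]

@[simp] lemma peirce_of (i j : T) : peirce R i (of j) = if j = i then 1 else 0 := rfl

@[simp] lemma peirce_mul (i : T) (a b : FreeCommMagma T) :
    peirce R i (a * b) = X * (peirce R i a + peirce R i b) := by
  induction a using Quot.ind
  induction b using Quot.ind
  rfl

lemma coeff_zero_peirce_mul (i : T) (a b : FreeCommMagma T) :
    (peirce R i (a * b)).coeff 0 = 0 := by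
  simp

variable {R}

lemma peirce_eq_zero_of_count_eq_zero {i : T} {w : FreeCommMagma T} (h : count i w = 0) :
    peirce R i w = 0 := by
  induction w using induction_on with
  | of t => simp_all
  | mul a b ha hb =>
    rw [count_mul, Nat.add_eq_zero_iff] at h
    simp [ha h.1, hb h.2]

lemma exists_peirce_eq_X_pow_of_count_eq_one {i : T} {w : FreeCommMagma T}
    (h : count i w = 1) : ∃ p, peirce R i w = X ^ p := by
  induction w using induction_on with
  | of t => exact ⟨0, by simp_all⟩
  | mul a b ha hb =>
    rw [count_mul, Nat.add_eq_one_iff] at h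
    rcases h with ⟨h0, h1⟩ | ⟨h1, h0⟩
    · obtain ⟨p, hp⟩ := hb h1
      exact ⟨p + 1, by rw [peirce_mul, peirce_eq_zero_of_count_eq_zero h0, hp, pow_succ']; simp⟩
    · obtain ⟨p, hp⟩ := ha h1
      exact ⟨p + 1, by rw [peirce_mul, peirce_eq_zero_of_count_eq_zero h0, hp, pow_succ']; simp⟩

lemma natDegree_peirce_lt [Fintype T] (i : T) (w : FreeCommMagma T) :
    (peirce R i w).natDegree < ∑ j, count j w := by
  induction w using induction_on with
  | of t =>
    simp only [peirce_of, count_of, sum_ite_eq, mem_univ, if_true]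
    split_ifs <;> simp
  | mul a b ha hb =>
    have hX := natDegree_mul_le (p := (X : R[X])) (q := peirce R i a + peirce R i b)
    have hadd := natDegree_add_le (peirce R i a) (peirce R i b)
    have h1 : (X : R[X]).natDegree ≤ 1 := natDegree_X_le
    simp only [peirce_mul, count_mul, sum_add_distrib]
    omega

end Semiring

lemma peirce_lpow {R : Type*} [CommSemiring R] (i : T) (a u : FreeCommMagma T) (k : ℕ) :
    peirce R i (lpow a k u)
      = X ^ k * peirce R i u + X * (∑ j ∈ range k, X ^ j) * peirce R i a := by
  induction k with
  | zero => simp [lpow]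
  | succ k ih =>
    rw [lpow, peirce_mul, ih, geom_sum_succ]
    ring

lemma sum_eval_peirce_inv_two [Fintype T] {K : Type*} [Field K] (h2 : (2 : K) ≠ 0)
    (w : FreeCommMagma T) : ∑ i, (peirce K i w).eval 2⁻¹ = 1 := by
  induction w using induction_on with
  | of t => simp [apply_ite (Polynomial.eval (2⁻¹ : K))]
  | mul a b ha hb =>
    simp only [peirce_mul, eval_mul, eval_add, eval_X, sum_add_distrib, ← mul_sum, ha, hb]
    field_simp
    norm_num

end FreeCommMagma

open FreeCommMagma

section Algebra

variable {T : Type*} (K : Type*) [Field K]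

@[simp] lemma aug_mono (w : FreeCommMagma T) : aug K (mono K w) = 1 := by
  simp [aug, mono]

@[simp] lemma Dp_mono [DecidableEq T] (i : T) (w : FreeCommMagma T) :
    Dp K i (mono K w) = peirce K i w := by
  simp [Dp, mono]

-- `lpowMap K a u p = ∑ₖ pₖ • a^{{k}} u`, i.e. `p(Lₐ) u` for the left multiplication `Lₐ`.
noncomputable def lpowMap (a u : FreeCommMagma T) :
    K[X] →ₗ[K] MonoidAlgebra K (FreeCommMagma T) :=
  Polynomial.lsum fun k => LinearMap.toSpanSingleton K _ (mono K (lpow a k u))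

variable {K}

@[simp] lemma lpowMap_monomial (a u : FreeCommMagma T) (k : ℕ) (c : K) :
    lpowMap K a u (monomial k c) = c • mono K (lpow a k u) := by
  simp [lpowMap, sum_monomial_index]

lemma lpowMap_X_pow (a u : FreeCommMagma T) (k : ℕ) :
    lpowMap K a u (X ^ k) = mono K (lpow a k u) := by
  simp [X_pow_eq_monomial]

lemma aug_lpowMap (a u : FreeCommMagma T) (p : K[X]) : aug K (lpowMap K a u p) = p.eval 1 := by
  induction p using Polynomial.induction_on' with
  | add f g hf hg => simp [hf, hg]
  | monomial k c => simp

lemma span_mono_lpow (a u : FreeCommMagma T) (m : ℕ) :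
    Submodule.span K ((fun k => mono K (lpow a k u)) '' Set.Iic m)
      = (degreeLT K (m + 1)).map (lpowMap K a u) := by
  classical
  rw [degreeLT_eq_span_X_pow, Submodule.map_span, coe_image, Set.image_image, coe_range,
    Set.Iio_add_one_eq_Iic]
  simp only [lpowMap_X_pow]

variable [DecidableEq T]

-- Multiplied by `X - 1` so that the geometric sums coming from `peirce_lpow` close up.
lemma Dp_lpowMap (i : T) (a u : FreeCommMagma T) (p : K[X]) :
    (X - 1) * Dp K i (lpowMap K a u p)
      = (X - 1) * p * peirce K i u + X * (p - C (p.eval 1)) * peirce K i a := by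
  induction p using Polynomial.induction_on' with
  | add f g hf hg => simp only [map_add, mul_add, hf, hg, eval_add]; ring
  | monomial k c =>
    rw [lpowMap_monomial, map_smul, Dp_mono, peirce_lpow, ← C_mul_X_pow_eq_monomial,
      smul_eq_C_mul]
    simp only [eval_mul, eval_C, eval_pow, eval_X, one_pow, mul_one]
    linear_combination (C c * X * peirce K i a) * geom_sum_mul (X : K[X]) k

lemma Dp_lpowMap_of_peirce_eq_zero {i : T} {a : FreeCommMagma T} (h : peirce K i a = 0)
    (u : FreeCommMagma T) (p : K[X]) : Dp K i (lpowMap K a u p) = p * peirce K i u :=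
  mul_left_cancel₀ (X_sub_C_ne_zero 1) (by rw [C_1, Dp_lpowMap, h]; ring)

end Algebra

section DegreeLT

variable {R : Type*} [Semiring R]

lemma X_pow_mem_degreeLT {k n : ℕ} (h : k < n) : (X : R[X]) ^ k ∈ degreeLT R n :=
  mem_degreeLT.2 ((degree_X_pow_le k).trans_lt (by exact_mod_cast h))

lemma X_mul_mem_degreeLT [Nontrivial R] {n : ℕ} {f : R[X]} (hf : f ∈ degreeLT R n) :
    X * f ∈ degreeLT R (n + 1) := by
  rw [mem_degreeLT] at hf ⊢
  rw [X_mul, degree_mul_X]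
  exact WithBot.add_lt_add_right WithBot.coe_ne_bot hf

lemma geom_sum_mem_degreeLT (n : ℕ) : ∑ j ∈ range n, (X : R[X]) ^ j ∈ degreeLT R n :=
  Submodule.sum_mem _ fun _ hj => X_pow_mem_degreeLT (mem_range.1 hj)

end DegreeLT

variable {K : Type*} [Field K]

lemma eq_zero_of_train_equations {p q r : K[X]}
    (hy : p * X ^ 2 + q * X + r * X = 0) (hz : p * X + q * X ^ 2 + r * X = 0)
    (hx : (X - 1) * (p + q) * X ^ 2 + X * (p + q + r - C ((p + q + r).eval 1)) = 0) :
    p = 0 ∧ q = 0 ∧ r = 0 := by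
  have hX1 : (X - 1 : K[X]) ≠ 0 := by simpa using X_sub_C_ne_zero (1 : K)
  have h2X1 : (2 * X - 1 : K[X]) ≠ 0 := fun h => by simpa using congrArg (eval 0) h
  have hpq : p = q := by
    have : (p - q) * (X * (X - 1)) = 0 := by linear_combination hy - hz
    simpa [hX1, sub_eq_zero] using this
  subst hpq
  have hr : r = -((X + 1) * p) := by
    have : X * (r + (X + 1) * p) = 0 := by linear_combination hy
    simpa [add_eq_zero_iff_eq_neg] using this
  subst hr
  have heval : (p + p + -((X + 1) * p)).eval 1 = 0 := by simp; ring
  have hp : p * (X * (X - 1) * (2 * X - 1)) = 0 := by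
    rw [heval, C_0] at hx
    linear_combination hx
  simp_all

lemma exists_eq_X_mul_X_sub_C_mul {c : K} (hc : c ≠ 0) {f : K[X]} {n : ℕ}
    (hf : f ∈ degreeLT K (n + 2)) (hf0 : f.coeff 0 = 0) (hfc : f.eval c = 0) :
    ∃ t ∈ degreeLT K n, f = X * (X - C c) * t := by
  obtain ⟨g, rfl⟩ := X_dvd_iff.2 hf0
  obtain ⟨t, rfl⟩ := dvd_iff_isRoot.2 (by simpa [hc] using hfc : g.IsRoot c)
  refine ⟨t, ?_, by ring⟩
  rcases eq_or_ne t 0 with rfl | ht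
  · exact zero_mem _
  have hdeg : (X * ((X - C c) * t)).natDegree = t.natDegree + 2 := by
    rw [natDegree_mul X_ne_zero (mul_ne_zero (X_sub_C_ne_zero c) ht),
      natDegree_mul (X_sub_C_ne_zero c) ht, natDegree_X, natDegree_X_sub_C]
    ring
  rw [mem_degreeLT, ← natDegree_lt_iff_degree_lt (by simp [ht, X_sub_C_ne_zero])] at hf
  rw [mem_degreeLT, ← natDegree_lt_iff_degree_lt ht]
  omega

lemma exists_sub_geom_sums_eq_X_mul_X_sub_half_mul (h2 : (2 : K) ≠ 0) {n k l : ℕ} {a : K[X]}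
    (hk : k ≤ n) (hl : l ≤ n) (ha : a ∈ degreeLT K (n + 2)) (ha0 : a.coeff 0 = 0)
    (hkraft : a.eval 2⁻¹ + 2⁻¹ ^ (k + 1) + 2⁻¹ ^ (l + 1) = 1) :
    ∃ t ∈ degreeLT K n, a - C 2⁻¹ * (X * (∑ j ∈ range k, X ^ j + ∑ j ∈ range l, X ^ j))
      = X * (X - C 2⁻¹) * t := by
  have hsum : ∑ j ∈ range k, X ^ j + ∑ j ∈ range l, X ^ j ∈ degreeLT K n :=
    add_mem (degreeLT_mono hk (geom_sum_mem_degreeLT k))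
      (degreeLT_mono hl (geom_sum_mem_degreeLT l))
  refine exists_eq_X_mul_X_sub_C_mul (inv_ne_zero h2) (sub_mem ha ?_) (by simp [ha0]) ?_
  · rw [← smul_eq_C_mul]
    exact Submodule.smul_mem _ _ (degreeLT_mono (by omega) (X_mul_mem_degreeLT hsum))
  · have ek := geom_sum_mul (2⁻¹ : K) k
    have el := geom_sum_mul (2⁻¹ : K) l
    simp only [eval_sub, eval_mul, eval_C, eval_X, eval_add, eval_finsetSum, eval_pow]
    linear_combination hkraft + 2⁻¹ * ek + 2⁻¹ * el
      - (1 + 2⁻¹ * ∑ j ∈ range k, (2⁻¹ : K) ^ j + 2⁻¹ * ∑ j ∈ range l, (2⁻¹ : K) ^ j)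
        * inv_mul_cancel₀ h2

-- `p + q = t` and `p - q = (X^k - X^l) / (X - 1)`.
lemma exists_train_solution (h2 : (2 : K) ≠ 0) {n k l : ℕ} {a : K[X]}
    (hk : k ≤ n) (hl : l ≤ n)
    (ha : a ∈ degreeLT K (n + 2)) (ha0 : a.coeff 0 = 0)
    (hkraft : a.eval 2⁻¹ + 2⁻¹ ^ (k + 1) + 2⁻¹ ^ (l + 1) = 1) :
    ∃ p ∈ degreeLT K n, ∃ q ∈ degreeLT K n, ∃ r ∈ degreeLT K (n + 1),
      (p + q + r).eval 1 = 1 ∧ p * X ^ 2 + q * X + r * X = X ^ (k + 1) ∧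
      p * X + q * X ^ 2 + r * X = X ^ (l + 1) ∧
      (X - 1) * (p + q) * X ^ 2 + X * (p + q + r - 1) = (X - 1) * a := by
  obtain ⟨t, ht, hat⟩ := exists_sub_geom_sums_eq_X_mul_X_sub_half_mul h2 hk hl ha ha0 hkraft
  set gk := ∑ j ∈ range k, (X : K[X]) ^ j
  set gl := ∑ j ∈ range l, (X : K[X]) ^ j
  have hgk : gk * (X - 1) = X ^ k - 1 := geom_sum_mul X k
  have hgl : gl * (X - 1) = X ^ l - 1 := geom_sum_mul X l
  have hD : gk - gl ∈ degreeLT K n :=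
    sub_mem (degreeLT_mono hk (geom_sum_mem_degreeLT k))
      (degreeLT_mono hl (geom_sum_mem_degreeLT l))
  have hhalf : C (2⁻¹ : K) * 2 = 1 := by
    rw [← C_ofNat, ← C_mul, inv_mul_cancel₀ h2, C_1]
  refine ⟨C 2⁻¹ * (t + (gk - gl)), ?_, C 2⁻¹ * (t - (gk - gl)), ?_,
    C 2⁻¹ * (X ^ k + X ^ l - (X + 1) * t), ?_, ?_, ?_, ?_, ?_⟩
  · rw [← smul_eq_C_mul]
    exact Submodule.smul_mem _ _ (add_mem ht hD)
  · rw [← smul_eq_C_mul]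
    exact Submodule.smul_mem _ _ (sub_mem ht hD)
  · rw [← smul_eq_C_mul, add_mul]
    exact Submodule.smul_mem _ _ (sub_mem (add_mem (X_pow_mem_degreeLT (by omega))
      (X_pow_mem_degreeLT (by omega))) (add_mem (X_mul_mem_degreeLT ht)
        (by simpa using degreeLT_mono (by omega) ht)))
  · simp only [eval_add, eval_sub, eval_mul, eval_C, eval_pow, eval_X, one_pow, eval_one]
    linear_combination mul_inv_cancel₀ h2
  · linear_combination (C (2⁻¹ : K) * X) * (hgk - hgl) + X ^ (k + 1) * hhalf
  · linear_combination -(C (2⁻¹ : K) * X) * (hgk - hgl) + X ^ (l + 1) * hhalf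
  · linear_combination -(X - 1) * hat - (C (2⁻¹ : K) * X) * (hgk + hgl)
      + (X - (X ^ 2 - X ^ 3) * t) * hhalf

noncomputable def trainComb (p q r : K[X]) : MonoidAlgebra K (FreeCommMagma (Fin 3)) :=
  lpowMap K x3 (x3 * y3 * z3) p + lpowMap K x3 (x3 * z3 * y3) q + lpowMap K x3 (y3 * z3) r

lemma mem_trainSpan3 {n : ℕ} (hn : 1 ≤ n) {P : MonoidAlgebra K (FreeCommMagma (Fin 3))} :
    P ∈ trainSpan3 K n ↔
      ∃ p ∈ degreeLT K n, ∃ q ∈ degreeLT K n, ∃ r ∈ degreeLT K (n + 1), trainComb p q r = P := by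
  obtain ⟨m, rfl⟩ := Nat.exists_eq_add_of_le' hn
  simp only [trainSpan3, Submodule.span_union, span_mono_lpow, Nat.add_sub_cancel,
    Submodule.mem_sup, Submodule.mem_map, trainComb]
  constructor
  · rintro ⟨_, ⟨_, ⟨p, hp, rfl⟩, _, ⟨q, hq, rfl⟩, rfl⟩, _, ⟨r, hr, rfl⟩, rfl⟩
    exact ⟨p, hp, q, hq, r, hr, rfl⟩
  · rintro ⟨p, hp, q, hq, r, hr, rfl⟩
    exact ⟨_, ⟨_, ⟨p, hp, rfl⟩, _, ⟨q, hq, rfl⟩, rfl⟩, _, ⟨r, hr, rfl⟩, rfl⟩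

lemma mono_notMem_trainSpan3 {n : ℕ} {w : FreeCommMagma (Fin 3)}
    (hw₁ : ∀ r, w ≠ lpow x3 r (x3 * y3 * z3)) (hw₂ : ∀ r, w ≠ lpow x3 r (x3 * z3 * y3))
    (hw₃ : ∀ r, w ≠ lpow x3 r (y3 * z3)) : mono K w ∉ trainSpan3 K n := by
  let coeffAt : MonoidAlgebra K (FreeCommMagma (Fin 3)) →ₗ[K] K :=
    Finsupp.lapply w ∘ₗ (MonoidAlgebra.coeffLinearEquiv K).toLinearMap
  have hspan : trainSpan3 K n ≤ LinearMap.ker coeffAt := by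
    refine Submodule.span_le.2 ?_
    rintro _ ((⟨r, -, rfl⟩ | ⟨r, -, rfl⟩) | ⟨r, -, rfl⟩) <;>
      simp [coeffAt, mono, Ne.symm (hw₁ r), Ne.symm (hw₂ r), Ne.symm (hw₃ r)]
  intro hw
  simpa [coeffAt, mono] using hspan hw

@[simp] lemma aug_trainComb (p q r : K[X]) :
    aug K (trainComb p q r) = (p + q + r).eval 1 := by
  simp [trainComb, aug_lpowMap]

lemma Dp_one_trainComb (p q r : K[X]) :
    Dp K 1 (trainComb p q r) = p * X ^ 2 + q * X + r * X := by
  have hx : peirce K 1 x3 = 0 := by simp [x3]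
  simp only [trainComb, map_add, Dp_lpowMap_of_peirce_eq_zero hx]
  simp +decide only [x3, y3, z3, peirce_mul, peirce_of, if_true, if_false]
  ring

lemma Dp_two_trainComb (p q r : K[X]) :
    Dp K 2 (trainComb p q r) = p * X + q * X ^ 2 + r * X := by
  have hx : peirce K 2 x3 = 0 := by simp [x3]
  simp only [trainComb, map_add, Dp_lpowMap_of_peirce_eq_zero hx]
  simp +decide only [x3, y3, z3, peirce_mul, peirce_of, if_true, if_false]
  ring

lemma Dp_zero_trainComb (p q r : K[X]) :
    (X - 1) * Dp K 0 (trainComb p q r)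
      = (X - 1) * (p + q) * X ^ 2 + X * (p + q + r - C ((p + q + r).eval 1)) := by
  simp only [trainComb, map_add, mul_add, Dp_lpowMap]
  simp +decide only [x3, y3, z3, peirce_mul, peirce_of, if_true, if_false, eval_add, C_add]
  ring

lemma exists_trainComb_peirce_eq (h2 : (2 : K) ≠ 0) {n : ℕ} {w : FreeCommMagma (Fin 3)}
    (hx : count 0 w = n) (hy : count 1 w = 1) (hz : count 2 w = 1) :
    ∃ p ∈ degreeLT K n, ∃ q ∈ degreeLT K n, ∃ r ∈ degreeLT K (n + 1),
      aug K (trainComb p q r) = 1 ∧ ∀ i, Dp K i (trainComb p q r) = peirce K i w := by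
  obtain ⟨u, v, rfl⟩ : ∃ u v, w = u * v := by
    induction w using induction_on with
    | of t =>
      simp only [count_of] at hy hz
      split_ifs at hy hz with hy1 hz2
      exact absurd (hy1.symm.trans hz2) (by decide)
    | mul u v _ _ => exact ⟨u, v, rfl⟩
  have hsize : ∑ j, count j (u * v) = n + 2 := by
    rw [Fin.sum_univ_three, hx, hy, hz]
  have hdeg := fun i => (natDegree_peirce_lt (R := K) i (u * v)).trans_eq hsize
  have hexp : ∀ i, count i (u * v) = 1 →
      ∃ k ≤ n, peirce K i (u * v) = X ^ (k + 1) := fun i hi => by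
    obtain ⟨k, hk⟩ := exists_peirce_eq_X_pow_of_count_eq_one (R := K) hi
    have hk0 : 0 ≠ k := by simpa [hk, coeff_X_pow] using coeff_zero_peirce_mul K i u v
    have hkn := hdeg i
    rw [hk, natDegree_X_pow] at hkn
    exact ⟨k - 1, by omega, by rw [hk, Nat.sub_add_cancel (by omega)]⟩
  obtain ⟨k, hk, hpy⟩ := hexp 1 hy
  obtain ⟨l, hl, hpz⟩ := hexp 2 hz
  have hkraft := sum_eval_peirce_inv_two h2 (u * v)
  rw [Fin.sum_univ_three, hpy, hpz, eval_pow, eval_pow, eval_X] at hkraft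
  obtain ⟨p, hp, q, hq, r, hr, heval, hpy', hpz', hpx'⟩ := exists_train_solution h2 hk hl
    (mem_degreeLT.2 (degree_le_natDegree.trans_lt (by exact_mod_cast hdeg 0)))
    (coeff_zero_peirce_mul K 0 u v) hkraft
  refine ⟨p, hp, q, hq, r, hr, by rw [aug_trainComb, heval], fun i => ?_⟩
  fin_cases i <;> simp only [Fin.zero_eta, Fin.mk_one, Fin.reduceFinMk, Fin.isValue]
  · refine mul_left_cancel₀ (X_sub_C_ne_zero 1) ?_
    rw [C_1, Dp_zero_trainComb, heval, C_1, hpx']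
  · rw [Dp_one_trainComb, hpy', hpy]
  · rw [Dp_two_trainComb, hpz', hpz]

lemma eq_zero_of_mem_trainSpan3_of_Dp_eq_zero {n : ℕ} (hn : 1 ≤ n)
    {P : MonoidAlgebra K (FreeCommMagma (Fin 3))} (hP : P ∈ trainSpan3 K n)
    (h : ∀ i, Dp K i P = 0) : P = 0 := by
  obtain ⟨p, -, q, -, r, -, rfl⟩ := (mem_trainSpan3 hn).1 hP
  obtain ⟨rfl, rfl, rfl⟩ := eq_zero_of_train_equations
    ((Dp_one_trainComb p q r).symm.trans (h 1)) ((Dp_two_trainComb p q r).symm.trans (h 2))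
    (by rw [← Dp_zero_trainComb, h 0, mul_zero])
  simp [trainComb]

lemma eq_zero_of_pairwise_add_eq_zero (h2 : (2 : K) ≠ 0) {a b c : K}
    (hab : a + b = 0) (hbc : b + c = 0) (hca : c + a = 0) : a = 0 ∧ b = 0 ∧ c = 0 := by
  have key : ∀ {a b c : K}, a + b = 0 → b + c = 0 → c + a = 0 → a = 0 := fun hab hbc hca =>
    (mul_eq_zero.1 (by linear_combination hab - hbc + hca : (2 : K) * _ = 0)).resolve_left h2
  exact ⟨key hab hbc hca, key hbc hca hab, key hca hab hbc⟩

lemma eq_zero_of_Dp_eq_zero_multidegree_one_one_one (h2 : (2 : K) ≠ 0) {a b c d e g : K}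
    (h : ∀ i : Fin 3, Dp K i (a • mono K (x3 * (y3 * z3)) + b • mono K ((x3 * y3) * z3)
        + c • mono K ((x3 * z3) * y3) + d • mono K (x3 * y3)
        + e • mono K (x3 * z3) + g • mono K (y3 * z3)) = 0) :
    a • mono K (x3 * (y3 * z3)) + b • mono K ((x3 * y3) * z3)
        + c • mono K ((x3 * z3) * y3) + d • mono K (x3 * y3)
        + e • mono K (x3 * z3) + g • mono K (y3 * z3) = 0 := by
  have hx := h 0
  have hy := h 1
  have hz := h 2
  simp only [map_add, map_smul, Dp_mono] at hx hy hz
  simp +decide only [x3, y3, z3, peirce_mul, peirce_of, if_true, if_false] at hx hy hz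
  have hx1 := Polynomial.ext_iff.1 hx 1
  have hy1 := Polynomial.ext_iff.1 hy 1
  have hz1 := Polynomial.ext_iff.1 hz 1
  have hx2 := Polynomial.ext_iff.1 hx 2
  have hy2 := Polynomial.ext_iff.1 hy 2
  have hz2 := Polynomial.ext_iff.1 hz 2
  simp only [add_zero, mul_zero, mul_one, smul_zero, coeff_add, coeff_smul, coeff_X, coeff_mul_X,
    coeff_zero, smul_eq_mul, one_ne_zero, OfNat.one_ne_ofNat, zero_add, if_true, if_false]
    at hx1 hy1 hz1 hx2 hy2 hz2
  obtain ⟨rfl, rfl, rfl⟩ := eq_zero_of_pairwise_add_eq_zero h2 hy2 hx2 (by rwa [add_comm])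
  obtain ⟨rfl, rfl, rfl⟩ := eq_zero_of_pairwise_add_eq_zero (a := d) (b := e) (c := g) h2
    (by simpa using hx1) (by simpa using hz1) (by simpa [add_comm] using hy1)
  simp

end Evanescent

open Evanescent in
/-- (i) There is no train Peirce-evanescent identity of degree
`(1,1,1)`; (ii) for `n ≥ 2` and every monomial `w` of multidegree `(n,1,1)` not of any of
the forms `x^{{r}}((x·y)·z)`, `x^{{r}}((x·z)·y)`, `x^{{r}}(y·z)`, there is a unique `P_w`
in the span of `{x^{{k}}((x·y)·z) : k ≤ n−1} ∪ {x^{{k}}((x·z)·y) : k ≤ n−1}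
∪ {x^{{k}}(y·z) : k ≤ n}` with `ε(P_w) = 1` and
`∂ₓ(w − P_w) = ∂_y(w − P_w) = ∂_z(w − P_w) = 0`; consequently `w − P_w` is a
Peirce-evanescent identity. -/
theorem train_identities_multidegree_n_one_one
    {K : Type*} [Field K] (hchar : (2 : K) ≠ 0) :
    (∀ a b c d e g : K,
      (∀ i : Fin 3, Dp K i (a • mono K (x3 * (y3 * z3)) + b • mono K ((x3 * y3) * z3)
        + c • mono K ((x3 * z3) * y3) + d • mono K (x3 * y3)
        + e • mono K (x3 * z3) + g • mono K (y3 * z3)) = 0) →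
      a • mono K (x3 * (y3 * z3)) + b • mono K ((x3 * y3) * z3)
        + c • mono K ((x3 * z3) * y3) + d • mono K (x3 * y3)
        + e • mono K (x3 * z3) + g • mono K (y3 * z3) = 0) ∧
    (∀ n : ℕ, 2 ≤ n → ∀ w : FreeCommMagma (Fin 3),
      FreeCommMagma.count 0 w = n → FreeCommMagma.count 1 w = 1 →
      FreeCommMagma.count 2 w = 1 →
      (∀ r : ℕ, w ≠ lpow x3 r ((x3 * y3) * z3)) →
      (∀ r : ℕ, w ≠ lpow x3 r ((x3 * z3) * y3)) →
      (∀ r : ℕ, w ≠ lpow x3 r (y3 * z3)) →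
      (∃! P : MonoidAlgebra K (FreeCommMagma (Fin 3)),
        P ∈ trainSpan3 K n ∧ aug K P = 1 ∧
        ∀ i : Fin 3, Dp K i (mono K w - P) = 0) ∧
      (∀ P : MonoidAlgebra K (FreeCommMagma (Fin 3)),
        P ∈ trainSpan3 K n → aug K P = 1 →
        (∀ i : Fin 3, Dp K i (mono K w - P) = 0) →
        mono K w - P ≠ 0 ∧ aug K (mono K w - P) = 0)) := by
  refine ⟨fun a b c d e g => eq_zero_of_Dp_eq_zero_multidegree_one_one_one hchar, ?_⟩
  intro n hn w hx hy hz hw₁ hw₂ hw₃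
  have hn₁ : 1 ≤ n := by omega
  obtain ⟨p, hp, q, hq, r, hr, haug, hDp⟩ := exists_trainComb_peirce_eq hchar hx hy hz
  have hmem := (mem_trainSpan3 hn₁).2 ⟨p, hp, q, hq, r, hr, rfl⟩
  have hev : ∀ i, Dp K i (mono K w - trainComb p q r) = 0 := fun i => by
    rw [map_sub, Dp_mono, hDp, sub_self]
  refine ⟨⟨_, ⟨hmem, haug, hev⟩, fun Q ⟨hQ, _, hQev⟩ => ?_⟩,
    fun P hP hPaug _ => ⟨?_, ?_⟩⟩
  · refine sub_eq_zero.1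
      (eq_zero_of_mem_trainSpan3_of_Dp_eq_zero hn₁ (sub_mem hQ hmem) fun i => ?_)
    rw [← sub_sub_sub_cancel_left _ Q (mono K w), map_sub, hev i, hQev i, sub_zero]
  · exact sub_ne_zero.2 fun h => mono_notMem_trainSpan3 hw₁ hw₂ hw₃ (h ▸ hP)
  · rw [map_sub, aug_mono, hPaug, sub_self]
end
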